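/- arXiv:1512.03909 — 2 statements merged into one kernel-verified Lean document; each statement's English description precedes it below -/
import Mathlib

section
/- Define N : ℕ × ℤ → ℤ by N(0,0) = t (for a fixed even positive integer t), N(0,i) = 0 for i ≠ 0, and for n ≥ 1: N(n,i) = ⌈(N(n-1,i-1) - 1)/2⌉ + ⌊(N(n-1,i+1) - 1)/2⌋ if this is nonnegative, where by convention ⌈(x-1)/2⌉ and ⌊(x-1)/2⌋ are taken to be 0 when x = 0. Then for all n ≥ 1 and all j > 0 such that N(n,j) ≥ 1 and N(n,-j) ≥ 1, we have N(n,j) - N(n,-j) = 1. -/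
private lemma floor_half' (k : ℤ) : ⌊((k : ℚ)) / 2⌋ = k / 2 := by
  obtain ⟨m, hm | hm⟩ : ∃ m : ℤ, k = 2*m ∨ k = 2*m + 1 := ⟨k/2, by omega⟩ <;> subst hm
  · rw [show ((((2*m : ℤ)) : ℚ))/2 = (m:ℚ) by push_cast; ring, Int.floor_intCast]; omega
  · rw [show ((((2*m+1 : ℤ)) : ℚ))/2 = (m:ℚ) + 1/2 by push_cast; ring]
    rw [show ⌊(m:ℚ) + 1/2⌋ = m by rw [Int.floor_eq_iff]; constructor <;> norm_num]
    omega

private lemma ceil_half' (k : ℤ) : ⌈((k : ℚ)) / 2⌉ = (k + 1) / 2 := by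
  obtain ⟨m, hm | hm⟩ : ∃ m : ℤ, k = 2*m ∨ k = 2*m + 1 := ⟨k/2, by omega⟩ <;> subst hm
  · rw [show ((((2*m : ℤ)) : ℚ))/2 = (m:ℚ) by push_cast; ring, Int.ceil_intCast]; omega
  · rw [show ((((2*m+1 : ℤ)) : ℚ))/2 = (m:ℚ) + 1/2 by push_cast; ring]
    rw [show ⌈(m:ℚ) + 1/2⌉ = m + 1 by rw [Int.ceil_eq_iff]; constructor <;> norm_num]
    omega

/-- Theorem 1 (quasi-symmetry of the Abelian RR2): with an even number `t` of
ants released at the origin, two symmetric occupied sites on line `n ≥ 1`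
differ by exactly one passage (the extra ant goes East). -/
theorem stmt_5 (t : ℤ) (ht : 0 < t) (hteven : Even t)
    (N : ℕ → ℤ → ℤ)
    (h00 : N 0 0 = t)
    (h0 : ∀ i : ℤ, i ≠ 0 → N 0 i = 0)
    (hrec : ∀ (n : ℕ) (i : ℤ), N (n + 1) i =
      (if N n (i - 1) = 0 then 0 else ⌈((N n (i - 1) : ℚ) - 1) / 2⌉) +
      (if N n (i + 1) = 0 then 0 else ⌊((N n (i + 1) : ℚ) - 1) / 2⌋)) :
    ∀ (n : ℕ) (j : ℤ), 1 ≤ n → 0 < j → 1 ≤ N n j → 1 ≤ N n (-j) →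
      N n j - N n (-j) = 1 := by
  -- integer form of the recursion
  have hstep : ∀ (n : ℕ) (i : ℤ), 0 ≤ N n (i + 1) →
      N (n + 1) i = N n (i - 1) / 2 + max ((N n (i + 1) - 1) / 2) 0 := by
    intro n i hB
    rw [hrec]
    congr 1
    · by_cases hA : N n (i - 1) = 0
      · simp [hA]
      · rw [if_neg hA,
          show ((N n (i - 1) : ℚ) - 1) = (((N n (i - 1) - 1 : ℤ)) : ℚ) by push_cast; ring,
          ceil_half']
        omega
    · by_cases hB0 : N n (i + 1) = 0
      · rw [if_pos hB0, hB0]; norm_num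
      · rw [if_neg hB0,
          show ((N n (i + 1) : ℚ) - 1) = (((N n (i + 1) - 1 : ℤ)) : ℚ) by push_cast; ring,
          floor_half']
        have : 0 ≤ (N n (i + 1) - 1) / 2 := by omega
        omega
  -- the inductive invariant
  have key : ∀ n : ℕ,
      (∀ i : ℤ, 0 ≤ N n i) ∧
      (∀ i : ℤ, (i - (n : ℤ)) % 2 ≠ 0 → N n i = 0) ∧
      (∀ j : ℤ, 1 ≤ j → N n (-j) = max (N n j - 1) 0) ∧
      (N n 0 % 2 = 0 ∧ (N n 2 ≤ N n 0 ∨ N n 2 ≤ 1)) ∧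
      (∀ j : ℤ, 1 ≤ j → N n (j + 2) ≤ 1 ∨
        (N n (j + 2) ≤ N n j - 1 ∧ (N n j % 2 = 0 → N n (j + 2) ≤ N n j - 2))) := by
    intro n
    induction n with
    | zero =>
      refine ⟨?_, ?_, ?_, ?_, ?_⟩
      · intro i
        by_cases hi : i = 0
        · rw [hi, h00]; omega
        · rw [h0 i hi]
      · intro i hi
        exact h0 i (by intro h; rw [h] at hi; simp at hi)
      · intro j hj
        rw [h0 (-j) (by omega), h0 j (by omega)]
        omega
      · constructor
        · obtain ⟨u, hu⟩ := hteven
          rw [h00]; omega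
        · rw [h0 2 (by omega), h00]; omega
      · intro j hj
        rw [h0 (j + 2) (by omega)]
        omega
    | succ n ih =>
      obtain ⟨hpos, hpar, hmir, ⟨hev, hfr⟩, hchain⟩ := ih
      -- nonnegativity at level n+1
      have hpos' : ∀ i : ℤ, 0 ≤ N (n + 1) i := by
        intro i
        rw [hstep n i (hpos _)]
        have := hpos (i - 1)
        omega
      refine ⟨hpos', ?_, ?_, ?_, ?_⟩
      · -- parity support
        intro i hi
        rw [hstep n i (hpos _), hpar (i - 1) (by push_cast at hi ⊢; omega),
          hpar (i + 1) (by push_cast at hi ⊢; omega)]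
        omega
      · -- mirror relation
        intro j hj
        rcases eq_or_lt_of_le hj with hj1 | hj2
        · -- j = 1
          have hb := hpos 2
          have hc := hpos 0
          have e1 := hstep n 1 (hpos _)
          have e2 := hstep n (-1) (hpos _)
          have m2 := hmir 2 (by omega)
          rw [← hj1]
          norm_num at e1 e2 m2 ⊢
          omega
        · -- j ≥ 2
          have hj2' : (2 : ℤ) ≤ j := hj2
          have e1 := hstep n j (hpos _)
          have e2 := hstep n (-j) (hpos _)
          have m1 := hmir (j - 1) (by omega)
          have m2 := hmir (j + 1) (by omega)
          have hR := hchain (j - 1) (by omega)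
          have ha := hpos (j - 1)
          have hb := hpos (j + 1)
          rw [show -j - 1 = -(j + 1) by ring, show -j + 1 = -(j - 1) by ring] at e2
          rw [show j - 1 + 2 = j + 1 by ring] at hR
          omega
      · -- center conditions
        have e0 := hstep n 0 (hpos _)
        have e2 := hstep n 2 (hpos _)
        have m1 := hmir 1 (by omega)
        have hR := hchain 1 (by omega)
        have hb := hpos 1
        have hd := hpos 3
        norm_num at e0 e2 m1 hR
        omega
      · -- decay chain
        intro j hj
        rcases eq_or_lt_of_le hj with hj1 | hj2
        · -- j = 1
          have e1 := hstep n 1 (hpos _)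
          have e3 := hstep n 3 (hpos _)
          have hR := hchain 2 (by omega)
          have hb := hpos 2
          have hc := hpos 0
          have hd := hpos 4
          rw [← hj1]
          norm_num at e1 e3 hR ⊢
          omega
        · -- j ≥ 2
          have hj2' : (2 : ℤ) ≤ j := hj2
          have e1 := hstep n j (hpos _)
          have e3 := hstep n (j + 2) (hpos _)
          have hR1 := hchain (j - 1) (by omega)
          have hR2 := hchain (j + 1) (by omega)
          have ha := hpos (j - 1)
          have hb := hpos (j + 1)
          have hd := hpos (j + 3)
          rw [show j + 2 - 1 = j + 1 by ring, show j + 2 + 1 = j + 3 by ring] at e3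
          rw [show j - 1 + 2 = j + 1 by ring] at hR1
          rw [show j + 1 + 2 = j + 3 by ring] at hR2
          omega
  -- conclude
  intro n j _ hj h1 h2
  have hm := (key n).2.2.1 j (by omega)
  omega
end

section
/- With N the RR2 Abelian recursion with t ants and h(n,i) = t·(n choose ((i+n)/2))/2^n the binomial model, for every fixed site (n,i) with n ≡ i (mod 2) and |i| ≤ n: |N_t(n,i) - h_t(n,i)| ≤ n, where N_t denotes the recursion started with t ants. In particular N_t(n,i)/t → (n choose ((i+n)/2))/2^n as t → ∞. -/
/-!
Compare the Abelian count with exact halving through the deficit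
`d n i = t * pascal n i / 2 ^ n - ants t n i`. A site holding `a ≥ 1` ants sends `a / 2` of them
right and `(a - 1) / 2` left; against exact halving it loses at most `1/2` to the right and `1` to
the left, but at most `1` in total. Hence `d ≥ 0`, and `d (n + 1) i` is the average of its two
parents plus these losses. Tracking one site only gives `3n/2`, so bound instead the deficit
summed over `k` consecutive sites of the same parity by `k n - k (k - 1) / 2` for `k ≤ n + 1`:
the sites feeding a window lose at most `1` each except at its two ends, and longer windows are
trimmed because `d` vanishes outside the light cone. The case `k = 1` gives `0 ≤ d ≤ n`.
-/

open Filter Finset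

namespace AbelianRR2

/-- `⌈(a - 1) / 2⌉ = a / 2` ants move right and `⌊(a - 1) / 2⌋` move left; truncated
subtraction makes an empty site send nothing to the left. -/
def ants (t : ℕ) : ℕ → ℤ → ℕ
  | 0, i => if i = 0 then t else 0
  | n + 1, i => ants t n (i - 1) / 2 + (ants t n (i + 1) - 1) / 2

def pascal : ℕ → ℤ → ℕ
  | 0, i => if i = 0 then 1 else 0
  | n + 1, i => pascal n (i - 1) + pascal n (i + 1)

lemma ants_eq_zero_of_lt_abs {t n : ℕ} {i : ℤ} (h : (n : ℤ) < |i|) : ants t n i = 0 := by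
  induction n generalizing i with
  | zero => simp [ants, abs_pos.mp h]
  | succ n ih =>
    rw [lt_abs] at h
    simp [ants, ih (lt_abs.2 (by omega) : (n : ℤ) < |i - 1|),
      ih (lt_abs.2 (by omega) : (n : ℤ) < |i + 1|)]

lemma pascal_eq_zero_of_lt_abs {n : ℕ} {i : ℤ} (h : (n : ℤ) < |i|) : pascal n i = 0 := by
  induction n generalizing i with
  | zero => simp [pascal, abs_pos.mp h]
  | succ n ih =>
    rw [lt_abs] at h
    simp [pascal, ih (lt_abs.2 (by omega) : (n : ℤ) < |i - 1|),
      ih (lt_abs.2 (by omega) : (n : ℤ) < |i + 1|)]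

lemma pascal_two_mul_sub (n k : ℕ) : pascal n (2 * k - n) = n.choose k := by
  induction n generalizing k with
  | zero =>
    cases k with
    | zero => simp [pascal]
    | succ k => simp [pascal]; omega
  | succ n ih =>
    cases k with
    | zero =>
      rw [pascal, pascal_eq_zero_of_lt_abs (lt_abs.2 (by omega)),
        show (2 * ((0 : ℕ) : ℤ) - (n + 1 : ℕ) + 1) = 2 * (0 : ℕ) - n by push_cast; ring, ih]
      simp
    | succ k =>
      rw [pascal,
        show (2 * ((k + 1 : ℕ) : ℤ) - (n + 1 : ℕ) - 1) = 2 * k - n by push_cast; ring,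
        show (2 * ((k + 1 : ℕ) : ℤ) - (n + 1 : ℕ) + 1) = 2 * (k + 1 : ℕ) - n by
          push_cast; ring,
        ih, ih, Nat.choose_succ_succ]

noncomputable def deficit (t n : ℕ) (i : ℤ) : ℚ := t * pascal n i / 2 ^ n - ants t n i

lemma deficit_eq_zero_of_lt_abs (t : ℕ) {n : ℕ} {i : ℤ} (h : (n : ℤ) < |i|) :
    deficit t n i = 0 := by
  simp [deficit, ants_eq_zero_of_lt_abs h, pascal_eq_zero_of_lt_abs h]

lemma deficit_zero (t : ℕ) (i : ℤ) : deficit t 0 i = 0 := by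
  by_cases hi : i = 0 <;> simp [deficit, ants, pascal, hi]

def rightLoss (a : ℕ) : ℚ := a / 2 - (a / 2 : ℕ)

def leftLoss (a : ℕ) : ℚ := a / 2 - ((a - 1) / 2 : ℕ)

@[simp] lemma rightLoss_zero : rightLoss 0 = 0 := by simp [rightLoss]

@[simp] lemma leftLoss_zero : leftLoss 0 = 0 := by simp [leftLoss]

lemma rightLoss_nonneg (a : ℕ) : 0 ≤ rightLoss a := by
  have h : ((2 * (a / 2) : ℕ) : ℚ) ≤ a := by exact_mod_cast Nat.mul_div_le a 2
  push_cast at h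
  rw [rightLoss]; linarith

lemma rightLoss_le_half (a : ℕ) : rightLoss a ≤ 1 / 2 := by
  have h : (a : ℚ) ≤ ((2 * (a / 2) + 1 : ℕ) : ℚ) := by
    exact_mod_cast (by omega : a ≤ 2 * (a / 2) + 1)
  push_cast at h
  rw [rightLoss]; linarith

lemma leftLoss_nonneg (a : ℕ) : 0 ≤ leftLoss a := by
  have h : ((2 * ((a - 1) / 2) : ℕ) : ℚ) ≤ a := by
    exact_mod_cast (by omega : 2 * ((a - 1) / 2) ≤ a)
  push_cast at h
  rw [leftLoss]; linarith

lemma rightLoss_add_leftLoss_le_one (a : ℕ) : rightLoss a + leftLoss a ≤ 1 := by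
  have h : (a : ℚ) ≤ ((a / 2 + (a - 1) / 2 + 1 : ℕ) : ℚ) := by
    exact_mod_cast (by omega : a ≤ a / 2 + (a - 1) / 2 + 1)
  push_cast at h
  rw [rightLoss, leftLoss]; linarith

lemma leftLoss_le_one (a : ℕ) : leftLoss a ≤ 1 := by
  linarith [rightLoss_add_leftLoss_le_one a, rightLoss_nonneg a]

lemma deficit_succ (t n : ℕ) (i : ℤ) :
    deficit t (n + 1) i = (deficit t n (i - 1) + deficit t n (i + 1)) / 2
      + rightLoss (ants t n (i - 1)) + leftLoss (ants t n (i + 1)) := by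
  simp only [deficit, rightLoss, leftLoss, ants, pascal]
  push_cast
  ring

lemma deficit_nonneg (t n : ℕ) (i : ℤ) : 0 ≤ deficit t n i := by
  induction n generalizing i with
  | zero => rw [deficit_zero]
  | succ n ih =>
    rw [deficit_succ]
    linarith [ih (i - 1), ih (i + 1), rightLoss_nonneg (ants t n (i - 1)),
      leftLoss_nonneg (ants t n (i + 1))]

noncomputable def windowDeficit (t n : ℕ) (i : ℤ) (k : ℕ) : ℚ :=
  ∑ j ∈ range k, deficit t n (i + 2 * j)

@[simp] lemma windowDeficit_zero (t n : ℕ) (i : ℤ) : windowDeficit t n i 0 = 0 := by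
  simp [windowDeficit]

lemma windowDeficit_succ (t n : ℕ) (i : ℤ) (k : ℕ) :
    windowDeficit t n i (k + 1) = windowDeficit t n i k + deficit t n (i + 2 * k) :=
  sum_range_succ _ _

lemma windowDeficit_succ' (t n : ℕ) (i : ℤ) (k : ℕ) :
    windowDeficit t n i (k + 1) = deficit t n i + windowDeficit t n (i + 2) k := by
  rw [windowDeficit, sum_range_succ', add_comm]
  congr 1
  · simp
  · refine sum_congr rfl fun j _ => ?_
    congr 1; push_cast; ring

lemma windowDeficit_succ_le (t n : ℕ) (i : ℤ) (k : ℕ) :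
    windowDeficit t (n + 1) i (k + 1) ≤
      (windowDeficit t n (i - 1) (k + 2) + windowDeficit t n (i + 1) k) / 2
        + rightLoss (ants t n (i - 1)) + k + leftLoss (ants t n (i + 2 * k + 1)) := by
  induction k with
  | zero =>
    simp [windowDeficit_succ, deficit_succ, show i - 1 + 2 = i + 1 by ring]
  | succ k ih =>
    rw [windowDeficit_succ, windowDeficit_succ t n (i - 1) (k + 2),
      windowDeficit_succ t n (i + 1) k, deficit_succ]
    have e₁ : i + 2 * ((k + 1 : ℕ) : ℤ) - 1 = i + 2 * k + 1 := by push_cast; ring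
    have e₂ : i - 1 + 2 * ((k + 2 : ℕ) : ℤ) = i + 2 * ((k + 1 : ℕ) : ℤ) + 1 := by
      push_cast; ring
    have e₃ : i + 1 + 2 * (k : ℤ) = i + 2 * k + 1 := by ring
    rw [e₁, e₂, e₃]
    push_cast at ih ⊢
    linarith [rightLoss_add_leftLoss_le_one (ants t n (i + 2 * k + 1))]

/-- The solution of `B (n + 1) (k + 1) = (B n (k + 2) + B n k) / 2 + k + 3 / 2` with `B n 1 = n`,
the recursion satisfied by window deficits away from the edge of the light cone. -/
def windowBound (n k : ℕ) : ℚ := k * n - k * (k - 1) / 2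

lemma windowBound_le_succ {n k : ℕ} (hk : k ≤ n) :
    windowBound n k ≤ windowBound n (k + 1) := by
  have : (k : ℚ) ≤ n := by exact_mod_cast hk
  simp only [windowBound]; push_cast; nlinarith

lemma windowBound_min_le_succ (n k : ℕ) :
    windowBound n (min k (n + 1)) ≤ windowBound n (min (k + 1) (n + 1)) := by
  rcases le_or_gt k n with hk | hk
  · rw [min_eq_left (by omega), min_eq_left (by omega)]
    exact windowBound_le_succ hk
  · rw [min_eq_right (by omega), min_eq_right (by omega)]

lemma windowDeficit_succ_le_windowBound (t n : ℕ) (i : ℤ) (k : ℕ)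
    (ih : ∀ i k, windowDeficit t n i k ≤ windowBound n (min k (n + 1)))
    (hlo : -(n + 1 : ℤ) ≤ i) (hhi : i + 2 * k ≤ n + 1) :
    windowDeficit t (n + 1) i (k + 1) ≤ windowBound (n + 1) (k + 1) := by
  have hstep := windowDeficit_succ_le t n i k
  have hA := ih (i - 1) (k + 2)
  have hB := ih (i + 1) k
  rw [min_eq_left (by omega : k ≤ n + 1)] at hB
  have hr_le := rightLoss_le_half (ants t n (i - 1))
  have hl_le := leftLoss_le_one (ants t n (i + 2 * k + 1))
  have hr_nonneg := rightLoss_nonneg (ants t n (i - 1))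
  have hl_nonneg := leftLoss_nonneg (ants t n (i + 2 * k + 1))
  have hbound : windowBound (n + 1) (k + 1)
      = (windowBound n (k + 2) + windowBound n k) / 2 + k + 3 / 2 := by
    simp only [windowBound]; push_cast; ring
  -- For `k ≥ n` the `k + 2` sources of the window cannot all lie in the light cone of line `n`.
  obtain hk | hk | hk : k + 1 ≤ n ∨ k = n ∨ k = n + 1 := by omega
  · rw [min_eq_left (by omega)] at hA
    linarith
  · subst k
    rw [min_eq_right (by omega)] at hA
    have : windowBound n (n + 1) = windowBound n (n + 2) + 1 := by
      simp only [windowBound]; push_cast; ring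
    have : rightLoss (ants t n (i - 1)) + leftLoss (ants t n (i + 2 * n + 1)) ≤ 1 := by
      rcases lt_or_ge (i - 1) (-n) with h | h
      · rw [ants_eq_zero_of_lt_abs (lt_abs.2 (by omega)), rightLoss_zero]; linarith
      · rw [ants_eq_zero_of_lt_abs (t := t) (lt_abs.2 (by omega) : (n : ℤ) < |i + 2 * n + 1|),
          leftLoss_zero]; linarith
    linarith
  · subst k
    rw [min_eq_right (by omega)] at hA
    have : windowBound n (n + 1) = windowBound n (n + 3) + 3 := by
      simp only [windowBound]; push_cast; ring
    rw [ants_eq_zero_of_lt_abs (lt_abs.2 (by omega) : (n : ℤ) < |i - 1|),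
      ants_eq_zero_of_lt_abs
        (lt_abs.2 (by omega) : (n : ℤ) < |i + 2 * (n + 1 : ℕ) + 1|)] at hstep
    simp only [rightLoss_zero, leftLoss_zero] at hstep
    push_cast at *
    linarith

theorem windowDeficit_le (t n : ℕ) (i : ℤ) (k : ℕ) :
    windowDeficit t n i k ≤ windowBound n (min k (n + 1)) := by
  induction n generalizing i k with
  | zero =>
    have hk : min k 1 = 0 ∨ min k 1 = 1 := by omega
    rcases hk with hk | hk <;> simp [windowDeficit, deficit_zero, windowBound, hk]
  | succ n ih =>
    induction k generalizing i with
    | zero => simp [windowBound]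
    | succ k ihk =>
      rcases lt_or_ge i (-(n + 1 : ℕ)) with hlo | hlo
      · rw [windowDeficit_succ', deficit_eq_zero_of_lt_abs t (lt_abs.2 (by omega)), zero_add]
        exact (ihk (i + 2)).trans (windowBound_min_le_succ _ _)
      rcases lt_or_ge ((n + 1 : ℕ) : ℤ) (i + 2 * k) with hhi | hhi
      · rw [windowDeficit_succ, deficit_eq_zero_of_lt_abs t (lt_abs.2 (by omega)), add_zero]
        exact (ihk i).trans (windowBound_min_le_succ _ _)
      rw [min_eq_left (by omega)]
      exact windowDeficit_succ_le_windowBound t n i k ih (by push_cast at hlo; omega)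
        (by push_cast at hhi; omega)

lemma deficit_le (t n : ℕ) (i : ℤ) : deficit t n i ≤ n := by
  simpa [windowDeficit, windowBound] using windowDeficit_le t n i 1

lemma abs_ants_sub_le (t n : ℕ) (i : ℤ) :
    |(ants t n i : ℚ) - t * pascal n i / 2 ^ n| ≤ n := by
  have h₀ := deficit_nonneg t n i
  have h₁ := deficit_le t n i
  rw [deficit] at h₀ h₁
  rw [abs_sub_comm, abs_le]
  constructor <;> linarith

lemma ceil_intCast_sub_one_div_two (a : ℤ) : ⌈((a : ℚ) - 1) / 2⌉ = a / 2 := by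
  rw [show ((a : ℚ) - 1) / 2 = ((a - 1 : ℤ) : ℚ) / ((2 : ℕ) : ℚ) by push_cast; ring,
    Rat.ceil_intCast_div_natCast]
  omega

lemma floor_intCast_sub_one_div_two (a : ℤ) : ⌊((a : ℚ) - 1) / 2⌋ = (a - 1) / 2 := by
  rw [show ((a : ℚ) - 1) / 2 = ((a - 1 : ℤ) : ℚ) / ((2 : ℕ) : ℚ) by push_cast; ring,
    Rat.floor_intCast_div_natCast]
  rfl

lemma eq_ants (N : ℕ → ℤ → ℤ) (t : ℕ) (h00 : N 0 0 = t)
    (h0 : ∀ i : ℤ, i ≠ 0 → N 0 i = 0)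
    (hrec : ∀ (n : ℕ) (i : ℤ), N (n + 1) i =
      (if N n (i - 1) = 0 then 0 else ⌈((N n (i - 1) : ℚ) - 1) / 2⌉) +
      (if N n (i + 1) = 0 then 0 else ⌊((N n (i + 1) : ℚ) - 1) / 2⌋))
    (n : ℕ) (i : ℤ) : N n i = ants t n i := by
  induction n generalizing i with
  | zero => by_cases hi : i = 0 <;> simp [ants, hi, h00, h0]
  | succ n ih =>
    rw [hrec, ih, ih, ceil_intCast_sub_one_div_two, floor_intCast_sub_one_div_two, ants]
    split_ifs <;> omega

lemma tendsto_div_natCast_of_abs_sub_mul_le {f : ℕ → ℚ} {c C : ℚ}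
    (h : ∀ t : ℕ, |f t - t * c| ≤ C) : Tendsto (fun t : ℕ => f t / t) atTop (nhds c) := by
  have hclose : ∀ᶠ t : ℕ in atTop, |f t / t - c| ≤ C / t := by
    filter_upwards [eventually_gt_atTop 0] with t ht
    have ht' : (0 : ℚ) < t := by exact_mod_cast ht
    rw [show f t / t - c = (f t - t * c) / t by field_simp, abs_div, abs_of_pos ht']
    exact div_le_div_of_nonneg_right (h t) ht'.le
  have hC := tendsto_const_div_atTop_nhds_zero_nat C
  refine tendsto_of_tendsto_of_tendsto_of_le_of_le'
    (by simpa using (tendsto_const_nhds (x := c)).sub hC)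
    (by simpa using (tendsto_const_nhds (x := c)).add hC) ?_ ?_
  · filter_upwards [hclose] with t ht
    linarith [(abs_le.1 ht).1]
  · filter_upwards [hclose] with t ht
    linarith [(abs_le.1 ht).2]

end AbelianRR2

open AbelianRR2 in
/-- Quantitative convergence of the Abelian RR2 to the binomial model: at every
site of the light cone with the right parity, the Abelian count differs from
`t·(n choose (i+n)/2)/2^n` by at most `n`, hence `N_t(n,i)/t → (n choose (i+n)/2)/2^n`. -/
theorem stmt_12
    (N : ℕ → ℕ → ℤ → ℤ)
    (h00 : ∀ t : ℕ, N t 0 0 = t)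
    (h0 : ∀ (t : ℕ) (i : ℤ), i ≠ 0 → N t 0 i = 0)
    (hrec : ∀ (t : ℕ) (n : ℕ) (i : ℤ), N t (n + 1) i =
      (if N t n (i - 1) = 0 then 0 else ⌈((N t n (i - 1) : ℚ) - 1) / 2⌉) +
      (if N t n (i + 1) = 0 then 0 else ⌊((N t n (i + 1) : ℚ) - 1) / 2⌋)) :
    ∀ (n : ℕ) (i : ℤ), i % 2 = (n : ℤ) % 2 → |i| ≤ (n : ℤ) →
      (∀ t : ℕ,
        |(N t n i : ℚ) - (t : ℚ) * (n.choose ((i + n).toNat / 2) : ℚ) / 2 ^ n| ≤ n) ∧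
      Tendsto (fun t : ℕ => (N t n i : ℚ) / t) atTop
        (nhds ((n.choose ((i + n).toNat / 2) : ℚ) / 2 ^ n)) := by
  intro n i hpar hle
  have hpascal : pascal n i = n.choose ((i + n).toNat / 2) := by
    rw [abs_le] at hle
    rw [← pascal_two_mul_sub]
    congr 1
    omega
  have hbound (t : ℕ) :
      |(N t n i : ℚ) - t * (n.choose ((i + n).toNat / 2) : ℚ) / 2 ^ n| ≤ n := by
    rw [eq_ants (N t) t (h00 t) (h0 t) (hrec t), ← hpascal]
    exact_mod_cast abs_ants_sub_le t n i
  refine ⟨hbound, tendsto_div_natCast_of_abs_sub_mul_le (C := n) fun t => ?_⟩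
  rw [← mul_div_assoc]
  exact hbound t
end
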